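/- arXiv:0710.0667 — 5 statements merged into one kernel-verified Lean document; each statement's English description precedes it below -/
import Mathlib

section
/- The map R(c) = 1 - c/q_c²(0), where q_c(x) = 1 - ((x-c)/(1-c))² and q_c² denotes q_c composed with itself, has a fixed point c* in the interval (0, 0.36). -/
/-! `R(c) = c` is equivalent to `q_c²(0) = c/(1-c)`, and clearing denominators turns
`q_c²(0) - c/(1-c)` into `c·P(c)/(1-c)⁶` for the quintic `P` below. Since `P(0.1) < 0 < P(0.35)`,
the intermediate value theorem gives a root of `P` in `(0.1, 0.35)`. -/

noncomputable section

def quadFamily (c x : ℝ) : ℝ := 1 - ((x - c) / (1 - c)) ^ 2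

def fixedPointPoly (c : ℝ) : ℝ := 2 * c * (1 - c) ^ 3 - c ^ 3 - (1 - c) ^ 5

end

theorem quadFamily_iterate_zero_sub {c : ℝ} (hc : c ≠ 1) :
    quadFamily c (quadFamily c 0) - c / (1 - c) = c * fixedPointPoly c / (1 - c) ^ 6 := by
  have h1c : 1 - c ≠ 0 := sub_ne_zero.mpr hc.symm
  unfold quadFamily fixedPointPoly
  field_simp
  ring

theorem one_sub_div_eq_self_of_eq_div_one_sub {c Q : ℝ} (hc₀ : c ≠ 0) (hc₁ : c ≠ 1)
    (hQ : Q = c / (1 - c)) : 1 - c / Q = c := by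
  have h1c : 1 - c ≠ 0 := sub_ne_zero.mpr hc₁.symm
  rw [hQ, div_div_cancel₀ hc₀]
  ring

theorem exists_fixedPointPoly_eq_zero : ∃ c ∈ Set.Ioo (0.1 : ℝ) 0.35, fixedPointPoly c = 0 := by
  have hcont : ContinuousOn fixedPointPoly (Set.Icc 0.1 0.35) := by
    unfold fixedPointPoly; fun_prop
  have hsign : (0 : ℝ) ∈ Set.Ioo (fixedPointPoly 0.1) (fixedPointPoly 0.35) := by
    norm_num [fixedPointPoly]
  exact intermediate_value_Ioo (by norm_num) hcont hsign

/-- The map `R(c) = 1 - c/q_c²(0)`, with `q_c(x) = 1 - ((x-c)/(1-c))²` and `q_c²` the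
second iterate, has a fixed point `c*` in `(0, 0.36)`. -/
theorem stmt2 (q : ℝ → ℝ → ℝ)
    (hq : ∀ c x, q c x = 1 - ((x - c)/(1 - c))^2) :
    ∃ c ∈ Set.Ioo (0:ℝ) 0.36, 1 - c / (q c (q c 0)) = c := by
  obtain rfl : q = quadFamily := funext₂ hq
  obtain ⟨c, ⟨hc_low, hc_high⟩, hroot⟩ := exists_fixedPointPoly_eq_zero
  have hc₀ : c ≠ 0 := by linarith
  have hc₁ : c ≠ 1 := by linarith
  have hQ : quadFamily c (quadFamily c 0) = c / (1 - c) := by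
    rw [← sub_eq_zero, quadFamily_iterate_zero_sub hc₁, hroot]
    simp
  exact ⟨c, ⟨by linarith, by linarith⟩, one_sub_div_eq_self_of_eq_div_one_sub hc₀ hc₁ hQ⟩
end

section
/- Let c* ∈ (0, 1/2) be a fixed point of R(c) = 1 - c/q_c²(0), and set σ_0* = q_{c*}²(0) and σ_1* = 1 - q_{c*}(0). Then (σ_0*)² = σ_1*. -/
/-! The fixed-point equation `1 - c / σ = c` says exactly `σ = c / (1 - c)`, and
`q_c(0) = 1 - (c / (1 - c))²`, so both sides equal `(c / (1 - c))²`. -/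

/-- At `c = 1` the equation forces `σ = 0`, matching the junk value `1 / 0 = 0`. -/
lemma eq_div_one_sub_of_one_sub_div_eq {c σ : ℝ} (h : 1 - c / σ = c) : σ = c / (1 - c) := by
  rcases eq_or_ne σ 0 with rfl | hσ
  · have hc : c = 1 := by simpa using h.symm
    simp [hc]
  · have hc : c ≠ 1 := by
      rintro rfl
      simp [hσ] at h
    rw [eq_div_iff (sub_ne_zero.mpr hc.symm)]
    field_simp at h
    linear_combination h

theorem stmt3_general (c : ℝ)
    (q : ℝ → ℝ) (hq : ∀ x, q x = 1 - ((x - c)/(1 - c))^2)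
    (hfix : 1 - c / (q (q 0)) = c) :
    (q (q 0))^2 = 1 - q 0 := by
  rw [eq_div_one_sub_of_one_sub_div_eq hfix, hq 0]
  ring

/-- If `c* ∈ (0,1/2)` is a fixed point of `R(c) = 1 - c/q_c²(0)`, then with
`σ₀* = q_{c*}²(0)` and `σ₁* = 1 - q_{c*}(0)` one has `(σ₀*)² = σ₁*`. -/
theorem stmt3 (c : ℝ) (hc : c ∈ Set.Ioo (0:ℝ) (1/2))
    (q : ℝ → ℝ) (hq : ∀ x, q x = 1 - ((x - c)/(1 - c))^2)
    (hfix : 1 - c / (q (q 0)) = c) :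
    (q (q 0))^2 = 1 - q 0 :=
  stmt3_general c q hq hfix
end

section
/- Let S : ℝ² → ℝ² be the linear-affine map S(x,y) = (-σ₀x + σ₀, σ₁y + 1 - σ₁) with σ₀² = σ₁ and let c ∈ (0,1) with S(c, 1) = (c, 1) and S(1,0) = (0, q_c(0)), where q_c(x) = 1 - ((x-c)/(1-c))². Then S maps the graph of q_c into the graph of q_c: for all x, S₂(q_c(x)) = q_c(S₁(x)). -/
lemma sub_eq_neg_mul_sub_of_apply_eq_self {f : ℝ → ℝ} {σ c : ℝ} (hf : ∀ x, f x = σ * (1 - x))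
    (hc : f c = c) (x : ℝ) : f x - c = -σ * (x - c) := by
  linear_combination hf x + hc - hf c

theorem stmt4_general (σ0 σ1 c : ℝ)
    (hsq : σ1 = σ0^2)
    (S1 S2 q : ℝ → ℝ)
    (hS1 : ∀ x, S1 x = σ0 * (1 - x)) (hS2 : ∀ y, S2 y = 1 - σ1 * (1 - y))
    (hq : ∀ x, q x = 1 - ((x - c)/(1 - c))^2)
    (hfixc : S1 c = c) :
    ∀ x, S2 (q x) = q (S1 x) := by
  intro x
  rw [hS2, hq, hq, sub_eq_neg_mul_sub_of_apply_eq_self hS1 hfixc, hsq]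
  ring

/-- If `S(x,y) = (σ₀(1-x), 1-σ₁(1-y))` with `σ₁ = σ₀²`, `S` fixes `(c,1)` and maps
`(1,0)` to `(0, q_c(0))`, then `S` maps the graph of `q_c` into itself:
`S₂(q_c(x)) = q_c(S₁(x))` for all `x`. -/
theorem stmt4 (σ0 σ1 c : ℝ) (hσ0 : σ0 ∈ Set.Ioo (0:ℝ) 1) (hσ1 : σ1 ∈ Set.Ioo (0:ℝ) 1)
    (hsq : σ1 = σ0^2) (hc : c ∈ Set.Ioo (0:ℝ) 1)
    (S1 S2 q : ℝ → ℝ)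
    (hS1 : ∀ x, S1 x = σ0 * (1 - x)) (hS2 : ∀ y, S2 y = 1 - σ1 * (1 - y))
    (hq : ∀ x, q x = 1 - ((x - c)/(1 - c))^2)
    (hfixc : S1 c = c) (hS0 : S2 0 = q 0) :
    ∀ x, S2 (q x) = q (S1 x) :=
  stmt4_general σ0 σ1 c hsq S1 S2 q hS1 hS2 hq hfixc
end

section
/- Let f = φ ∘ q_c on [c,1], where q_c(x) = 1 - ((x-c)/(1-c))², φ is a C² diffeomorphism of [0,1], and write Df(x) = E(x-c)(1+ε̄(x)), D²f(x) = E(1+ε(x)) with E = D²f(c). Then the nonlinearity η_φ = D(log Dφ) satisfies η_φ(q_c(x)) = -((1-c)²/2) · (ε(x) - ε̄(x))/((1+ε̄(x))·(x-c)²) for x ∈ (c, 1]. -/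
/-! Both derivatives of `f = φ ∘ q_c` are given by the chain rule in terms of `Dφ(q_c x)` and
`D²φ(q_c x)`, and `q_c` is an explicit quadratic. The first derivative determines
`Dφ(q_c x) = -E(1-c)²(1+ε̄(x))/2`; substituting this into the second derivative, the term
`Dφ(q_c x)·D²q_c` cancels `E(1+ε̄(x))`, leaving `D²φ(q_c x)·(Dq_c x)² = E(ε(x)-ε̄(x))`.
The quotient of the two is the claimed expression for `η_φ(q_c x)`. -/

theorem hasDerivAt_one_sub_div_sq (c d y : ℝ) :
    HasDerivAt (fun y => 1 - ((y - c) / d) ^ 2) (-(2 * (y - c) / d ^ 2)) y := by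
  refine (((((hasDerivAt_id' y).sub_const c).div_const d).fun_pow 2).const_sub 1).congr_deriv ?_
  field_simp
  ring

theorem hasDerivAt_neg_two_mul_sub_div (c d y : ℝ) :
    HasDerivAt (fun y => -(2 * (y - c) / d ^ 2)) (-(2 / d ^ 2)) y := by
  refine ((((hasDerivAt_id' y).sub_const c).const_mul 2).div_const (d ^ 2)).fun_neg.congr_deriv ?_
  ring

theorem deriv_comp_eq {φ φ' q q' : ℝ → ℝ} (hφ : ∀ u, HasDerivAt φ (φ' u) u)
    (hq : ∀ y, HasDerivAt q (q' y) y) :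
    deriv (fun y => φ (q y)) = fun y => φ' (q y) * q' y :=
  funext fun y => ((hφ (q y)).comp y (hq y)).deriv

theorem hasDerivAt_deriv_comp {φ φ' φ'' q q' q'' : ℝ → ℝ} {x : ℝ}
    (hφ : ∀ u, HasDerivAt φ (φ' u) u) (hφ' : HasDerivAt φ' (φ'' (q x)) (q x))
    (hq : ∀ y, HasDerivAt q (q' y) y) (hq' : HasDerivAt q' (q'' x) x) :
    HasDerivAt (deriv (fun y => φ (q y))) (φ'' (q x) * q' x ^ 2 + φ' (q x) * q'' x) x := by
  rw [deriv_comp_eq hφ hq]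
  exact ((hφ'.comp x (hq x)).mul hq').congr_deriv (by rw [Function.comp_apply]; ring)

theorem div_eq_of_chain_rule_eqs {c E x ε εbar a b : ℝ} (hc : c ≠ 1) (hx : x ≠ c)
    (hE : E ≠ 0) (hεbar : 1 + εbar ≠ 0)
    (h₁ : a * -(2 * (x - c) / (1 - c) ^ 2) = E * (x - c) * (1 + εbar))
    (h₂ : b * (-(2 * (x - c) / (1 - c) ^ 2)) ^ 2 + a * -(2 / (1 - c) ^ 2) = E * (1 + ε)) :
    b / a = -((1 - c) ^ 2 / 2) * ((ε - εbar) / ((1 + εbar) * (x - c) ^ 2)) := by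
  have hd : 1 - c ≠ 0 := sub_ne_zero.mpr hc.symm
  have ht : x - c ≠ 0 := sub_ne_zero.mpr hx
  have ha : a = -(E * (1 - c) ^ 2 * (1 + εbar) / 2) := by
    field_simp at h₁
    apply mul_right_cancel₀ ht
    linear_combination (-(1 : ℝ) / 2 * (x - c)) * h₁
  have hb : b * (4 * (x - c) ^ 2) = E * (ε - εbar) * (1 - c) ^ 4 := by
    rw [ha] at h₂
    field_simp at h₂
    apply mul_right_cancel₀ (pow_ne_zero 2 hd)
    linear_combination (1 - c) ^ 2 * h₂
  rw [ha, eq_div_iff (by positivity) |>.mpr hb]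
  field_simp
  ring

theorem stmt10_general (c E : ℝ) (hc : c ∈ Set.Ioo (0:ℝ) 1) (hE : E ≠ 0)
    (φ φ' φ'' q : ℝ → ℝ) (hq : ∀ x, q x = 1 - ((x - c)/(1 - c))^2)
    (hφ : ∀ u, HasDerivAt φ (φ' u) u) (hφ' : ∀ u, HasDerivAt φ' (φ'' u) u)
    (ε εbar : ℝ → ℝ)
    (hDf : ∀ x ∈ Set.Icc c 1, deriv (fun y => φ (q y)) x = E * (x - c) * (1 + εbar x))
    (hD2f : ∀ x ∈ Set.Icc c 1, deriv (deriv (fun y => φ (q y))) x = E * (1 + ε x))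
    (hne : ∀ x ∈ Set.Ioc c 1, 1 + εbar x ≠ 0) :
    ∀ x ∈ Set.Ioc c 1,
      φ'' (q x) / φ' (q x) =
        -((1 - c)^2 / 2) * ((ε x - εbar x) / ((1 + εbar x) * (x - c)^2)) := by
  intro x hx
  have hqc : q = fun y => 1 - ((y - c) / (1 - c)) ^ 2 := funext hq
  have hq' (y : ℝ) : HasDerivAt q (-(2 * (y - c) / (1 - c) ^ 2)) y :=
    hqc ▸ hasDerivAt_one_sub_div_sq c (1 - c) y
  have hxI : x ∈ Set.Icc c 1 := Set.Ioc_subset_Icc_self hx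
  have hf₁ := hDf x hxI
  rw [deriv_comp_eq hφ hq'] at hf₁
  have hf₂ := hD2f x hxI
  rw [(hasDerivAt_deriv_comp hφ (hφ' (q x)) hq'
    (q'' := fun _ => -(2 / (1 - c) ^ 2)) (hasDerivAt_neg_two_mul_sub_div c (1 - c) x)).deriv] at hf₂
  exact div_eq_of_chain_rule_eqs hc.2.ne hx.1.ne' hE (hne x hx) hf₁ hf₂

/-- For `f = φ ∘ q_c` on `[c,1]` with `Df(x) = E(x-c)(1+ε̄(x))` and `D²f(x) = E(1+ε(x))`,
the nonlinearity `η_φ = D²φ/Dφ` satisfies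
`η_φ(q_c(x)) = -((1-c)²/2)·(ε(x)-ε̄(x))/((1+ε̄(x))(x-c)²)` on `(c,1]`. -/
theorem stmt10 (c E : ℝ) (hc : c ∈ Set.Ioo (0:ℝ) 1) (hE : E ≠ 0)
    (φ φ' φ'' q : ℝ → ℝ) (hq : ∀ x, q x = 1 - ((x - c)/(1 - c))^2)
    (hφ : ∀ u, HasDerivAt φ (φ' u) u) (hφ' : ∀ u, HasDerivAt φ' (φ'' u) u)
    (hφpos : ∀ u ∈ Set.Icc (0:ℝ) 1, 0 < φ' u)
    (ε εbar : ℝ → ℝ)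
    (hDf : ∀ x ∈ Set.Icc c 1, deriv (fun y => φ (q y)) x = E * (x - c) * (1 + εbar x))
    (hD2f : ∀ x ∈ Set.Icc c 1, deriv (deriv (fun y => φ (q y))) x = E * (1 + ε x))
    (hne : ∀ x ∈ Set.Ioc c 1, 1 + εbar x ≠ 0) :
    ∀ x ∈ Set.Ioc c 1,
      φ'' (q x) / φ' (q x) =
        -((1 - c)^2 / 2) * ((ε x - εbar x) / ((1 + εbar x) * (x - c)^2)) :=
  stmt10_general c E hc hE φ φ' φ'' q hq hφ hφ' ε εbar hDf hD2f hne
end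

section
/- Let f : [0,1] → [0,1] be a C^{2+|·|} unimodal map with critical point c, written on [c,1] as f = φ₊ ∘ q_c with φ₊ a C¹ diffeomorphism of [0,1]. Then the nonlinearity η_{φ₊} is integrable: ∫₀¹ |η_{φ₊}(u)| du ≤ (min(1+ε̄))⁻¹ · ∫_c¹ |δ(x)|/|x-c| dx < ∞. -/
/-!
Write `Dq_c(x) = k (x - c)` and `D²f(x) = E (1 + ε(x))`. Differentiating `f = φ₊ ∘ q_c` once
and using `Df(c) = 0`, the fundamental theorem of calculus gives `E (1 + ε̄(x)) = k · Dφ₊(q_c x)`;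
differentiating twice then gives `E δ(x) = D²φ₊(q_c x) · (Dq_c x)²`. Dividing,
`|Dq_c x| · |η_{φ₊}(q_c x)| = |δ(x)| / ((x - c) (1 + ε̄(x)))`, and the change of variables
`u = q_c(x)` turns this pointwise bound into the integral bound.
The fundamental theorem of calculus needs `ε` integrable, which follows from `ε = δ + ε̄`,
since `ε̄` is bounded.
-/

open MeasureTheory Set

noncomputable def qc (c x : ℝ) : ℝ := 1 - ((x - c) / (1 - c)) ^ 2

theorem hasDerivAt_qc (c x : ℝ) : HasDerivAt (qc c) (-2 / (1 - c) ^ 2 * (x - c)) x := by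
  have h := ((((hasDerivAt_id' x).sub_const c).div_const (1 - c)).fun_pow 2).const_sub 1
  refine h.congr_deriv ?_
  simp only [Nat.cast_ofNat, ← inv_pow, div_eq_mul_inv]
  ring

@[fun_prop]
theorem continuous_qc (c : ℝ) : Continuous (qc c) := by
  unfold qc
  fun_prop

theorem qc_self (c : ℝ) : qc c c = 1 := by simp [qc]

theorem qc_one {c : ℝ} (hc : c < 1) : qc c 1 = 0 := by
  simp [qc, div_self (sub_ne_zero.2 hc.ne')]

theorem strictAntiOn_qc {c : ℝ} (hc : c < 1) : StrictAntiOn (qc c) (Ici c) := by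
  intro x hx y _ hxy
  have hxc : 0 ≤ (x - c) / (1 - c) := div_nonneg (sub_nonneg.2 hx) (sub_pos.2 hc).le
  have hlt : (x - c) / (1 - c) < (y - c) / (1 - c) := by gcongr
  simp only [qc]
  nlinarith

theorem mapsTo_qc {c : ℝ} (hc : c < 1) : MapsTo (qc c) (Icc c 1) (Icc 0 1) := by
  intro x hx
  have h := (strictAntiOn_qc hc).antitoneOn
  constructor
  · simpa [qc_one hc] using h (mem_Ici.2 hx.1) (mem_Ici.2 hc.le) hx.2
  · simpa [qc_self] using h self_mem_Ici (mem_Ici.2 hx.1) hx.1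

theorem qc_image_Ioo {c : ℝ} (hc : c < 1) : qc c '' Ioo c 1 = Ioo 0 1 := by
  apply Subset.antisymm
  · rintro _ ⟨x, hx, rfl⟩
    have h := strictAntiOn_qc hc
    constructor
    · simpa [qc_one hc] using h (mem_Ici.2 hx.1.le) (mem_Ici.2 hc.le) hx.2
    · simpa [qc_self] using h self_mem_Ici (mem_Ici.2 hx.1.le) hx.1
  · have h := intermediate_value_Ioo' hc.le (continuous_qc c).continuousOn
    rwa [qc_one hc, qc_self] at h

theorem eqOn_of_eqOn_comp {f f' φ φ' q q' : ℝ → ℝ} {U : Set ℝ} (hU : IsOpen U)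
    (hfU : EqOn f (φ ∘ q) U) (hf : ∀ y ∈ U, HasDerivAt f (f' y) y)
    (hφ : ∀ u, HasDerivAt φ (φ' u) u) (hq : ∀ y, HasDerivAt q (q' y) y) :
    EqOn f' (fun y => φ' (q y) * q' y) U := fun y hy =>
  (hf y hy).unique <|
    ((hφ (q y)).comp y (hq y)).congr_of_eventuallyEq (hfU.eventuallyEq_of_mem (hU.mem_nhds hy))

theorem hasDerivAt_of_eqOn_comp {f f' φ φ' φ'' q q' : ℝ → ℝ} {U : Set ℝ} {x q'' : ℝ}
    (hU : IsOpen U) (hx : x ∈ U) (hfU : EqOn f (φ ∘ q) U)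
    (hf : ∀ y ∈ U, HasDerivAt f (f' y) y)
    (hφ : ∀ u, HasDerivAt φ (φ' u) u) (hφ' : ∀ u, HasDerivAt φ' (φ'' u) u)
    (hq : ∀ y, HasDerivAt q (q' y) y) (hq' : HasDerivAt q' q'' x) :
    HasDerivAt f' (φ'' (q x) * q' x ^ 2 + φ' (q x) * q'') x := by
  have h := ((hφ' (q x)).comp x (hq x)).mul hq'
  have hf' := (eqOn_of_eqOn_comp hU hfU hf hφ hq).eventuallyEq_of_mem (hU.mem_nhds hx)
  exact (h.congr_of_eventuallyEq hf').congr_deriv (by rw [Function.comp_apply]; ring)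

theorem mul_one_add_average_eq {F ε : ℝ → ℝ} {E c x G : ℝ} (hcx : c < x)
    (hF : ∀ t ∈ Icc c x, HasDerivAt F (E * (1 + ε t)) t) (hFc : F c = 0)
    (hFx : F x = G * (x - c)) (hε : IntervalIntegrable ε volume c x) :
    E * (1 + (x - c)⁻¹ * ∫ t in c..x, ε t) = G := by
  have hint : IntervalIntegrable (fun t => E * (1 + ε t)) volume c x :=
    (intervalIntegrable_const.add hε).const_mul E
  have hFTC := intervalIntegral.integral_eq_sub_of_hasDerivAt (by rwa [uIcc_of_le hcx.le]) hint
  rw [intervalIntegral.integral_const_mul,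
    intervalIntegral.integral_add intervalIntegrable_const hε, intervalIntegral.integral_const,
    smul_eq_mul, hFc, sub_zero, hFx] at hFTC
  field_simp [sub_ne_zero.2 hcx.ne']
  linear_combination hFTC

theorem exists_abs_le_of_eq_average {ε εbar Φ : ℝ → ℝ} {c b : ℝ}
    (hΦ : ContinuousOn Φ (Icc c b))
    (hεbar : ∀ x ∈ Ioo c b, εbar x = (x - c)⁻¹ * ∫ t in c..x, ε t)
    (hεΦ : ∀ x ∈ Ioo c b, IntervalIntegrable ε volume c x → εbar x = Φ x) :
    ∃ B, ∀ x ∈ Ioo c b, |εbar x| ≤ B := by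
  obtain ⟨C, hC⟩ := isCompact_Icc.exists_bound_of_continuousOn hΦ
  refine ⟨max C 0, fun x hx => ?_⟩
  by_cases hint : IntervalIntegrable ε volume c x
  · rw [hεΦ x hx hint]
    exact (hC x (Ioo_subset_Icc_self hx)).trans (le_max_left _ _)
  -- otherwise the integral is the junk value `0`
  · simp [hεbar x hx, intervalIntegral.integral_undef hint]

theorem integrableOn_of_integrableOn_abs_sub_div {ε εbar : ℝ → ℝ} {c b B : ℝ}
    (hε : AEStronglyMeasurable ε (volume.restrict (Ioo c b)))
    (hB : ∀ x ∈ Ioo c b, |εbar x| ≤ B)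
    (hδ : IntegrableOn (fun x => |ε x - εbar x| / |x - c|) (Ioo c b)) :
    IntegrableOn ε (Ioo c b) := by
  refine Integrable.mono'
    ((hδ.const_mul (b - c)).add (integrableOn_const (C := B) (by simp) (by simp)))
    hε ((ae_restrict_iff' measurableSet_Ioo).2 (ae_of_all _ fun x hx => ?_))
  have hxc : 0 < x - c := sub_pos.2 hx.1
  have hδx : |ε x - εbar x| ≤ (b - c) * (|ε x - εbar x| / |x - c|) := by
    rw [abs_of_pos hxc, mul_div_assoc', le_div_iff₀ hxc, mul_comm]
    exact mul_le_mul_of_nonneg_right (by linarith [hx.2]) (abs_nonneg _)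
  calc ‖ε x‖ = |(ε x - εbar x) + εbar x| := by rw [sub_add_cancel, Real.norm_eq_abs]
    _ ≤ |ε x - εbar x| + |εbar x| := abs_add_le _ _
    _ ≤ (b - c) * (|ε x - εbar x| / |x - c|) + B := add_le_add hδx (hB x hx)

theorem aestronglyMeasurable_of_hasDerivAt_mul_one_add {F ε : ℝ → ℝ} {E : ℝ} (hE : E ≠ 0)
    {s : Set ℝ} (hs : MeasurableSet s) (hF : ∀ x ∈ s, HasDerivAt F (E * (1 + ε x)) x) :
    AEStronglyMeasurable ε (volume.restrict s) :=
  (((measurable_deriv F).div_const E).sub_const 1).aestronglyMeasurable.congr <|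
    (ae_restrict_iff' hs).2 <| ae_of_all _ fun x hx => by
      show deriv F x / E - 1 = ε x
      rw [(hF x hx).deriv]
      field_simp
      ring

theorem integrableOn_of_hasDerivAt_mul_one_add {F ε εbar G : ℝ → ℝ} {E c b : ℝ}
    (hE : E ≠ 0)
    (hF : ∀ t ∈ Ico c b, HasDerivAt F (E * (1 + ε t)) t) (hFc : F c = 0)
    (hFG : ∀ x ∈ Ioo c b, F x = G x * (x - c)) (hG : ContinuousOn G (Icc c b))
    (hεbar : ∀ x ∈ Ioo c b, εbar x = (x - c)⁻¹ * ∫ t in c..x, ε t)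
    (hδ : IntegrableOn (fun x => |ε x - εbar x| / |x - c|) (Ioo c b)) :
    IntegrableOn ε (Ioo c b) := by
  obtain ⟨B, hB⟩ := exists_abs_le_of_eq_average (Φ := fun x => G x / E - 1)
    ((hG.div_const E).sub continuousOn_const) hεbar fun x hx hint => by
      rw [hεbar x hx, ← mul_one_add_average_eq hx.1
        (fun t ht => hF t ⟨ht.1, ht.2.trans_lt hx.2⟩) hFc (hFG x hx) hint]
      field_simp
      ring
  exact integrableOn_of_integrableOn_abs_sub_div (aestronglyMeasurable_of_hasDerivAt_mul_one_add hE
    measurableSet_Ioo fun x hx => hF x (Ioo_subset_Ico_self hx)) hB hδ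

theorem abs_mul_abs_div_le {E k d p p₂ e ē m : ℝ} (hd : 0 < d) (hp : 0 < p) (hm : 0 < m)
    (hmē : m ≤ 1 + ē) (hē : E * (1 + ē) = p * k)
    (he : E * (1 + e) = p₂ * (k * d) ^ 2 + p * k) :
    |k * d| * |p₂ / p| ≤ m⁻¹ * (|e - ē| / d) := by
  rcases eq_or_ne k 0 with rfl | hk
  · rw [zero_mul, abs_zero, zero_mul]
    positivity
  have hē' : 0 < 1 + ē := hm.trans_le hmē
  have hsub : E * (e - ē) = p₂ * (k * d) ^ 2 := by linear_combination he - hē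
  have habsē : |E| * (1 + ē) = p * |k| := by
    rw [← abs_of_pos hē', ← abs_mul, hē, abs_mul, abs_of_pos hp]
  have hE : |E| ≠ 0 := fun h => by simp [h, hp.ne', hk] at habsē
  calc |k * d| * |p₂ / p| = |E * (e - ē)| / (p * |k| * d) := by
        rw [hsub, abs_mul, abs_mul, abs_div, abs_of_pos hd, abs_of_pos hp, abs_pow, abs_mul,
          abs_of_pos hd]
        field_simp
    _ = |e - ē| / d / (1 + ē) := by
        rw [← habsē, abs_mul]; field_simp
    _ ≤ |e - ē| / d / m := div_le_div_of_nonneg_left (by positivity) hm hmē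
    _ = m⁻¹ * (|e - ē| / d) := by ring

theorem integrableOn_image_and_integral_abs_le {s : Set ℝ} (hs : MeasurableSet s)
    {q q' g h : ℝ → ℝ} (hq : ∀ x, HasDerivAt q (q' x) x) (hinj : InjOn q s)
    (hg : Measurable g) (hh : IntegrableOn h s) (hgh : ∀ x ∈ s, |q' x| * |g (q x)| ≤ h x) :
    IntegrableOn g (q '' s) ∧ ∫ u in q '' s, |g u| ≤ ∫ x in s, h x := by
  have hq's : ∀ x ∈ s, HasDerivWithinAt q (q' x) s x := fun x _ => (hq x).hasDerivWithinAt
  have hq'_meas : Measurable q' := by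
    rw [show q' = deriv q from funext fun x => (hq x).deriv.symm]
    exact measurable_deriv q
  have hq_meas : Measurable q :=
    (Differentiable.continuous fun x => (hq x).differentiableAt).measurable
  have hcomp : IntegrableOn (fun x => |q' x| • g (q x)) s := by
    refine Integrable.mono' hh (hq'_meas.abs.mul (hg.comp hq_meas)).aestronglyMeasurable
      ((ae_restrict_iff' hs).2 (ae_of_all _ fun x hx => ?_))
    simpa [abs_mul] using hgh x hx
  refine ⟨(integrableOn_image_iff_integrableOn_abs_deriv_smul hs hq's hinj g).2 hcomp, ?_⟩
  rw [integral_image_eq_integral_abs_deriv_smul hs hq's hinj]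
  exact setIntegral_mono_on (by simpa [IntegrableOn, abs_mul] using hcomp.norm) hh hs hgh

theorem measurable_div_of_hasDerivAt {φ' φ'' : ℝ → ℝ}
    (hφ' : ∀ u, HasDerivAt φ' (φ'' u) u) :
    Measurable fun u => φ'' u / φ' u := by
  rw [show φ'' = deriv φ' from funext fun u => (hφ' u).deriv.symm]
  exact (measurable_deriv φ').div
    (Differentiable.continuous fun u => (hφ' u).differentiableAt).measurable

theorem stmt11_general (c E m : ℝ) (hc : c ∈ Set.Ioo (0:ℝ) 1) (hE : E ≠ 0) (hm : 0 < m)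
    (φ φ' φ'' q : ℝ → ℝ) (hq : ∀ x, q x = 1 - ((x - c)/(1 - c))^2)
    (hφ : ∀ u, HasDerivAt φ (φ' u) u) (hφ' : ∀ u, HasDerivAt φ' (φ'' u) u)
    (hφpos : ∀ u ∈ Set.Icc (0:ℝ) 1, 0 < φ' u)
    (f f' ε εbar δ : ℝ → ℝ)
    (hf : ∀ x ∈ Set.Icc c 1, f x = φ (q x))
    (hDf : ∀ x ∈ Set.Icc (0:ℝ) 1, HasDerivAt f (f' x) x)
    (hD2f : ∀ x ∈ Set.Icc (0:ℝ) 1, HasDerivAt f' (E * (1 + ε x)) x)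
    (hcrit : f' c = 0)
    (hεbar : ∀ x ≠ c, εbar x = (x - c)⁻¹ * ∫ t in c..x, ε t)
    (hδ : ∀ x, δ x = ε x - εbar x)
    (hC2abs : IntervalIntegrable (fun x => |δ x| / |x - c|) MeasureTheory.volume c 1)
    (hmin : ∀ x ∈ Set.Icc c 1, m ≤ 1 + εbar x) :
    IntervalIntegrable (fun u => |φ'' u / φ' u|) MeasureTheory.volume 0 1 ∧
    (∫ u in (0:ℝ)..1, |φ'' u / φ' u|) ≤ m⁻¹ * ∫ x in c..(1:ℝ), |δ x| / |x - c| := by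
  obtain ⟨hc0, hc1⟩ := hc
  obtain rfl : q = qc c := funext hq
  set k : ℝ := -2 / (1 - c) ^ 2
  have hIcc : ∀ {x}, x ∈ Ico c 1 → x ∈ Icc (0 : ℝ) 1 :=
    fun hx => ⟨hc0.le.trans hx.1, hx.2.le⟩
  have hfU : EqOn f (φ ∘ qc c) (Ioo c 1) := fun x hx => hf x (Ioo_subset_Icc_self hx)
  have hDfU (x : ℝ) (hx : x ∈ Ioo c 1) : HasDerivAt f (f' x) x :=
    hDf x (hIcc (Ioo_subset_Ico_self hx))
  have hD2fU (x : ℝ) (hx : x ∈ Ico c 1) : HasDerivAt f' (E * (1 + ε x)) x := hD2f x (hIcc hx)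
  have hf' (x : ℝ) (hx : x ∈ Ioo c 1) : f' x = φ' (qc c x) * k * (x - c) :=
    (eqOn_of_eqOn_comp isOpen_Ioo hfU hDfU hφ (hasDerivAt_qc c) hx).trans (mul_assoc _ _ _).symm
  have hf'' (x : ℝ) (hx : x ∈ Ioo c 1) :
      E * (1 + ε x) = φ'' (qc c x) * (k * (x - c)) ^ 2 + φ' (qc c x) * k :=
    (hD2fU x (Ioo_subset_Ico_self hx)).unique <| hasDerivAt_of_eqOn_comp isOpen_Ioo hx hfU hDfU
      hφ hφ' (hasDerivAt_qc c)
      ((((hasDerivAt_id' x).sub_const c).const_mul k).congr_deriv (mul_one k))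
  have hεbarU (x : ℝ) (hx : x ∈ Ioo c 1) : εbar x = (x - c)⁻¹ * ∫ t in c..x, ε t :=
    hεbar x hx.1.ne'
  have hδint : IntegrableOn (fun x => |δ x| / |x - c|) (Ioo c 1) :=
    (intervalIntegrable_iff_integrableOn_Ioo_of_le hc1.le).1 hC2abs
  have hφ'c : Continuous φ' := Differentiable.continuous fun u => (hφ' u).differentiableAt
  have hε : IntegrableOn ε (Ioo c 1) :=
    integrableOn_of_hasDerivAt_mul_one_add hE hD2fU hcrit hf'
      (by fun_prop : Continuous _).continuousOn hεbarU (by simpa only [hδ] using hδint)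
  have hkey (x : ℝ) (hx : x ∈ Ioo c 1) :
      |k * (x - c)| * |φ'' (qc c x) / φ' (qc c x)| ≤ m⁻¹ * (|δ x| / |x - c|) := by
    have havg : E * (1 + εbar x) = φ' (qc c x) * k := by
      rw [hεbarU x hx]
      exact mul_one_add_average_eq hx.1 (fun t ht => hD2fU t ⟨ht.1, ht.2.trans_lt hx.2⟩) hcrit
        (hf' x hx) ((intervalIntegrable_iff_integrableOn_Ioo_of_le hx.1.le).2
          (hε.mono_set (Ioo_subset_Ioo_right hx.2.le)))
    rw [hδ, abs_of_pos (sub_pos.2 hx.1)]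
    exact abs_mul_abs_div_le (sub_pos.2 hx.1) (hφpos _ (mapsTo_qc hc1 (Ioo_subset_Icc_self hx)))
      hm (hmin x (Ioo_subset_Icc_self hx)) havg (hf'' x hx)
  obtain ⟨hint, hle⟩ := integrableOn_image_and_integral_abs_le measurableSet_Ioo
    (hasDerivAt_qc c) ((strictAntiOn_qc hc1).injOn.mono fun x hx => mem_Ici.2 hx.1.le)
    (measurable_div_of_hasDerivAt hφ') (hδint.const_mul m⁻¹) hkey
  rw [qc_image_Ioo hc1] at hint hle
  refine ⟨(intervalIntegrable_iff_integrableOn_Ioo_of_le zero_le_one).2 hint.abs, ?_⟩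
  rwa [intervalIntegral.integral_of_le zero_le_one, intervalIntegral.integral_of_le hc1.le,
    integral_Ioc_eq_integral_Ioo, integral_Ioc_eq_integral_Ioo, ← integral_const_mul]

/-- For a `C^{2+|·|}` unimodal map `f = φ₊ ∘ q_c` on `[c,1]`, the nonlinearity
`η_{φ₊} = D²φ₊/Dφ₊` is integrable:
`∫₀¹ |η_{φ₊}| ≤ (min(1+ε̄))⁻¹ ∫_c¹ |δ(x)|/|x-c| dx < ∞`. -/
theorem stmt11 (c E m : ℝ) (hc : c ∈ Set.Ioo (0:ℝ) 1) (hE : E ≠ 0) (hm : 0 < m)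
    (φ φ' φ'' q : ℝ → ℝ) (hq : ∀ x, q x = 1 - ((x - c)/(1 - c))^2)
    (hφ : ∀ u, HasDerivAt φ (φ' u) u) (hφ' : ∀ u, HasDerivAt φ' (φ'' u) u)
    (hφpos : ∀ u ∈ Set.Icc (0:ℝ) 1, 0 < φ' u)
    (f f' ε εbar δ : ℝ → ℝ)
    (hf : ∀ x ∈ Set.Icc c 1, f x = φ (q x))
    (hDf : ∀ x ∈ Set.Icc (0:ℝ) 1, HasDerivAt f (f' x) x)
    (hD2f : ∀ x ∈ Set.Icc (0:ℝ) 1, HasDerivAt f' (E * (1 + ε x)) x)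
    (hcrit : f' c = 0)
    (hεbar : ∀ x ≠ c, εbar x = (x - c)⁻¹ * ∫ t in c..x, ε t) (hεbarc : εbar c = 0)
    (hδ : ∀ x, δ x = ε x - εbar x)
    (hC2abs : IntervalIntegrable (fun x => |δ x| / |x - c|) MeasureTheory.volume c 1)
    (hmin : ∀ x ∈ Set.Icc c 1, m ≤ 1 + εbar x) :
    IntervalIntegrable (fun u => |φ'' u / φ' u|) MeasureTheory.volume 0 1 ∧
    (∫ u in (0:ℝ)..1, |φ'' u / φ' u|) ≤ m⁻¹ * ∫ x in c..(1:ℝ), |δ x| / |x - c| :=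
  stmt11_general c E m hc hE hm φ φ' φ'' q hq hφ hφ' hφpos f f' ε εbar δ hf hDf hD2f hcrit hεbar hδ
    hC2abs hmin
end
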